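/- For 0 < β < 1, the M-Wright function M_β(t) = Σ_{n≥0} (-t)^n / (n! Γ(-βn + 1 - β)) defines an entire function of t, and its defining power series converges for all real t ≥ 0. -/

import Mathlib

open Real Filter Topology FormalMultilinearSeries

/-- Gautschi-type bound from log-convexity of `Γ`. -/
lemma gamma_add_le_aux {β x : ℝ} (hβ0 : 0 < β) (hβ1 : β < 1) (hx : 0 < x) :
    Real.Gamma (x + β) ≤ Real.Gamma x * x ^ β := by
  have hΓx : 0 < Real.Gamma x := Real.Gamma_pos_of_pos hx
  have hΓxβ : 0 < Real.Gamma (x + β) := Real.Gamma_pos_of_pos (by linarith)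
  have hx1 : (0:ℝ) < x + 1 := by linarith
  have h := Real.convexOn_log_Gamma.2 (Set.mem_Ioi.2 hx) (Set.mem_Ioi.2 hx1)
      (by linarith : (0:ℝ) ≤ 1 - β) hβ0.le (by ring)
  have hpt : (1 - β) • x + β • (x + 1) = x + β := by
    simp [smul_eq_mul]; ring
  rw [hpt] at h
  simp only [Function.comp_apply, smul_eq_mul] at h
  have hΓ1 : Real.Gamma (x + 1) = x * Real.Gamma x := Real.Gamma_add_one hx.ne'
  rw [hΓ1, Real.log_mul hx.ne' hΓx.ne'] at h
  have hrhs : (1 - β) * Real.log (Real.Gamma x) + β * (Real.log x + Real.log (Real.Gamma x))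
      = Real.log (Real.Gamma x * x ^ β) := by
    rw [Real.log_mul hΓx.ne' (Real.rpow_pos_of_pos hx β).ne', Real.log_rpow hx]
    ring
  rw [hrhs] at h
  exact (Real.log_le_log_iff hΓxβ (by positivity)).mp h

/-- Summability of the majorant series. -/
lemma majorant_summable_aux {β : ℝ} (hβ0 : 0 < β) (hβ1 : β < 1) {R : ℝ} (hR : 0 < R) :
    Summable (fun n : ℕ => R ^ n * Real.Gamma (β * (n + 1)) / n.factorial) := by
  set b : ℕ → ℝ := fun n => R ^ n * Real.Gamma (β * (n + 1)) / n.factorial with hb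
  have hbpos : ∀ n, 0 < b n := fun n => by
    have : 0 < Real.Gamma (β * (n + 1)) := Real.Gamma_pos_of_pos (by positivity)
    positivity
  set q : ℕ → ℝ := fun n => R * (β * ((n:ℝ) + 1)) ^ β / ((n:ℝ) + 1) with hq
  have hqtend : Tendsto q atTop (𝓝 0) := by
    have h1 : Tendsto (fun x : ℝ => R * β ^ β * x ^ (-(1 - β))) atTop (𝓝 (R * β ^ β * 0)) :=
      (tendsto_rpow_neg_atTop (by linarith)).const_mul _
    rw [mul_zero] at h1
    have h2 : Tendsto (fun n : ℕ => (n:ℝ) + 1) atTop atTop :=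
      tendsto_atTop_add_const_right _ 1 tendsto_natCast_atTop_atTop
    refine (h1.comp h2).congr fun n => ?_
    have hn : (0:ℝ) < (n:ℝ) + 1 := by positivity
    simp only [Function.comp_apply, hq]
    rw [Real.mul_rpow hβ0.le hn.le, show -(1 - β) = β + (-1) by ring,
        Real.rpow_add hn, Real.rpow_neg_one]
    ring
  have hev : ∀ᶠ n in atTop, ‖b (n + 1)‖ ≤ (1/2) * ‖b n‖ := by
    filter_upwards [hqtend.eventually_le_const (by norm_num : (0:ℝ) < 1/2)] with n hqn
    rw [Real.norm_of_nonneg (hbpos _).le, Real.norm_of_nonneg (hbpos _).le]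
    have hn : (0:ℝ) < (n:ℝ) + 1 := by positivity
    have hx : (0:ℝ) < β * ((n:ℝ) + 1) := by positivity
    have hΓle : Real.Gamma (β * ((n:ℕ)+1+1)) ≤
        Real.Gamma (β * ((n:ℝ) + 1)) * (β * ((n:ℝ) + 1)) ^ β := by
      have := gamma_add_le_aux hβ0 hβ1 hx
      have harg : β * ((n:ℕ)+1+1) = β * ((n:ℝ) + 1) + β := by push_cast; ring
      rw [harg]
      exact this
    have hfac : ((n+1).factorial : ℝ) = ((n:ℝ) + 1) * n.factorial := by
      rw [Nat.factorial_succ]; push_cast; ring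
    have hfn : (0:ℝ) < (n.factorial : ℝ) := by positivity
    calc b (n + 1) = R ^ (n+1) * Real.Gamma (β * ((n:ℕ)+1+1)) / ((n+1).factorial : ℝ) := by
          simp [hb]
      _ ≤ R ^ (n+1) * (Real.Gamma (β * ((n:ℝ) + 1)) * (β * ((n:ℝ) + 1)) ^ β)
            / (((n:ℝ) + 1) * n.factorial) := by
          rw [hfac]
          apply div_le_div_of_nonneg_right _ (by positivity)
          exact mul_le_mul_of_nonneg_left hΓle (by positivity)
      _ = q n * b n := by
          simp only [hq, hb]
          field_simp
          ring
      _ ≤ (1/2) * b n := mul_le_mul_of_nonneg_right hqn (hbpos n).le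
  exact summable_of_ratio_norm_eventually_le (by norm_num) hev

/-- Reflection bound for `1/Γ`. -/
lemma one_div_gamma_bound_aux {s : ℝ} (hs : 0 < s) :
    |1 / Real.Gamma (1 - s)| ≤ Real.Gamma s := by
  have hΓs : 0 < Real.Gamma s := Real.Gamma_pos_of_pos hs
  rcases eq_or_ne (Real.Gamma (1 - s)) 0 with h0 | h0
  · simp [h0, hΓs.le]
  · have hrefl := Real.Gamma_mul_Gamma_one_sub s
    have hsin : Real.sin (Real.pi * s) ≠ 0 := by
      intro hz
      rw [hz, div_zero] at hrefl
      exact (mul_ne_zero hΓs.ne' h0) hrefl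
    have : 1 / Real.Gamma (1 - s) = Real.Gamma s * Real.sin (Real.pi * s) / Real.pi := by
      have hπ : (0:ℝ) < Real.pi := Real.pi_pos
      field_simp at hrefl ⊢
      rw [eq_div_iff (by rwa [mul_comm] at hsin)] at hrefl
      nlinarith [hrefl]
    rw [this, abs_div, abs_mul, abs_of_pos hΓs, abs_of_pos Real.pi_pos]
    have h1 : |Real.sin (Real.pi * s)| ≤ 1 := abs_le.2 ⟨Real.neg_one_le_sin _, Real.sin_le_one _⟩
    calc Real.Gamma s * |Real.sin (Real.pi * s)| / Real.pi
        ≤ Real.Gamma s * 1 / 1 := by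
          apply div_le_div₀ (by positivity) _ one_pos (by linarith [Real.pi_gt_three] : (1:ℝ) ≤ Real.pi)
          exact mul_le_mul_of_nonneg_left h1 hΓs.le
      _ = Real.Gamma s := by ring

/-- The `M`-Wright function as a function of a complex variable. -/
noncomputable def MWrightC (β : ℝ) (t : ℂ) : ℂ :=
  ∑' n : ℕ, (-t) ^ n / (n.factorial * Complex.Gamma (((-β * n + 1 - β : ℝ) : ℂ)))

theorem MWright_entire_and_series_converges (β : ℝ) (hβ0 : 0 < β) (hβ1 : β < 1) :
    (∀ t : ℂ, Summable fun n : ℕ =>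
        (-t) ^ n / (n.factorial * Complex.Gamma (((-β * n + 1 - β : ℝ) : ℂ)))) ∧
    Differentiable ℂ (MWrightC β) ∧
    (∀ t : ℝ, 0 ≤ t → Summable fun n : ℕ =>
        (-t) ^ n / (n.factorial * Real.Gamma (-β * n + 1 - β))) := by
  set c : ℕ → ℂ := fun n =>
    (-1) ^ n / (n.factorial * Complex.Gamma (((-β * n + 1 - β : ℝ) : ℂ))) with hc
  have hcnorm : ∀ n : ℕ, ‖c n‖ ≤ Real.Gamma (β * ((n : ℝ) + 1)) / n.factorial := by
    intro n
    have hs : (0:ℝ) < β * ((n : ℝ) + 1) := by positivity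
    have harg : (-β * n + 1 - β : ℝ) = 1 - β * ((n : ℝ) + 1) := by ring
    have hfac : (0:ℝ) < (n.factorial : ℝ) := by positivity
    rw [hc]
    simp only [harg]
    rw [norm_div, norm_mul, Complex.Gamma_ofReal]
    have h1 : ‖((-1 : ℂ)) ^ n‖ = 1 := by simp
    have h2 : ‖(n.factorial : ℂ)‖ = (n.factorial : ℝ) := by
      rw [Complex.norm_natCast]
    have h3 : ‖((Real.Gamma (1 - β * ((n : ℝ) + 1)) : ℝ) : ℂ)‖
        = |Real.Gamma (1 - β * ((n : ℝ) + 1))| := Complex.norm_real _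
    rw [h1, h2, h3]
    have hb := one_div_gamma_bound_aux hs
    rw [abs_one_div] at hb
    calc (1:ℝ) / ((n.factorial:ℝ) * |Real.Gamma (1 - β * ((n : ℝ) + 1))|)
        = (1 / |Real.Gamma (1 - β * ((n : ℝ) + 1))|) / (n.factorial : ℝ) := by
          rw [div_div, mul_comm]
      _ ≤ Real.Gamma (β * ((n : ℝ) + 1)) / n.factorial := by gcongr
  set p := FormalMultilinearSeries.ofScalars ℂ c with hp
  have hrad : p.radius = ⊤ := by
    apply p.radius_eq_top_of_summable_norm
    intro r
    have hmaj := majorant_summable_aux hβ0 hβ1 (R := (r:ℝ) + 1) (by positivity)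
    refine hmaj.of_nonneg_of_le (fun n => by positivity) fun n => ?_
    rw [hp, FormalMultilinearSeries.ofScalars_norm]
    calc ‖c n‖ * (r:ℝ) ^ n
        ≤ (Real.Gamma (β * ((n : ℝ) + 1)) / n.factorial) * ((r:ℝ) + 1) ^ n := by
          gcongr
          · exact hcnorm n
          · linarith [r.coe_nonneg]
      _ = ((r:ℝ) + 1) ^ n * Real.Gamma (β * ((n : ℝ) + 1)) / n.factorial := by ring
  have hball : HasFPowerSeriesOnBall p.sum p 0 ⊤ := by
    have := p.hasFPowerSeriesOnBall (by rw [hrad]; exact ENNReal.zero_lt_top)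
    rwa [hrad] at this
  have hmem : ∀ z : ℂ, z ∈ EMetric.ball (0 : ℂ) ⊤ :=
    fun z => EMetric.mem_ball.2 (edist_lt_top _ _)
  have hterm : ∀ (t : ℂ) (n : ℕ), (p n fun _ => t) =
      (-t) ^ n / (n.factorial * Complex.Gamma (((-β * n + 1 - β : ℝ) : ℂ))) := by
    intro t n
    rw [hp, FormalMultilinearSeries.ofScalars_apply_eq, hc, smul_eq_mul, neg_pow]
    ring
  have hsummable : ∀ t : ℂ, Summable fun n : ℕ =>
      (-t) ^ n / (n.factorial * Complex.Gamma (((-β * n + 1 - β : ℝ) : ℂ))) := by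
    intro t
    have h := (hball.hasSum (hmem t)).summable
    exact h.congr fun n => hterm t n
  refine ⟨hsummable, ?_, ?_⟩
  · have hMW : MWrightC β = p.sum := by
      funext t
      rw [MWrightC, FormalMultilinearSeries.sum]
      exact tsum_congr fun n => (hterm t n).symm
    rw [hMW]
    intro z
    exact hball.differentiableOn.differentiableAt
      (EMetric.isOpen_ball.mem_nhds (hmem z))
  · intro t _
    have h := (hsummable (t : ℂ)).congr (g := fun n : ℕ =>
        (((-t) ^ n / (n.factorial * Real.Gamma (-β * n + 1 - β)) : ℝ) : ℂ)) ?_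
    · exact Complex.summable_ofReal.mp h
    · intro n
      rw [Complex.Gamma_ofReal]
      push_cast
      ring
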